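/- For ψ ∈ [0,1), γ ∈ (0, ψ+1) and all integers 1 ≤ k ≤ n, the (γ, ψ) Gnedin–Fisher Gibbs weight is the mixture of the extreme Poisson–Dirichlet(−1, ξ) Gibbs weights by the shifted generalized Waring mixing law: V(n,k) = ∑_{ξ=k}^{∞} w(ξ) · (ξ−1)!·ξ! / ((ξ−k)!·(ξ+n−1)!). -/

import Mathlib

/-- Rising factorial `(x)_m = x (x+1) ⋯ (x+m-1)`, with `(x)_0 = 1`. -/
noncomputable def riseFact (x : ℝ) (m : ℕ) : ℝ := ∏ i ∈ Finset.range m, (x + i)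


lemma riseFact_zero (x : ℝ) : riseFact x 0 = 1 := by simp [riseFact]

lemma riseFact_succ (x : ℝ) (m : ℕ) : riseFact x (m + 1) = riseFact x m * (x + m) := by
  simp [riseFact, Finset.prod_range_succ]

lemma riseFact_add (x : ℝ) (m p : ℕ) :
    riseFact x (m + p) = riseFact x m * riseFact (x + m) p := by
  induction p with
  | zero => simp [riseFact_zero]
  | succ p ih =>
      rw [← Nat.add_assoc, riseFact_succ, ih, riseFact_succ]
      push_cast; ring

lemma riseFact_pos {x : ℝ} (hx : 0 < x) (m : ℕ) : 0 < riseFact x m := by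
  apply Finset.prod_pos; intro i _; positivity

lemma riseFact_one (x : ℝ) : riseFact x 1 = x := by simp [riseFact]

lemma riseFact_succ' (x : ℝ) (m : ℕ) : riseFact x (m + 1) = x * riseFact (x + 1) m := by
  have := riseFact_add x 1 m
  rw [Nat.add_comm 1 m] at this
  simpa [riseFact_one] using this

/-- Summability of the binomial series with positive parameter. -/
lemma summable_binAux {c : ℝ} (hc : 0 < c) {q : ℝ} (hq0 : 0 ≤ q) (hq : q < 1) :
    Summable (fun n : ℕ => riseFact c n / n.factorial * q ^ n) := by
  rcases eq_or_lt_of_le hq0 with h0 | h0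
  · apply summable_of_ne_finset_zero (s := {0})
    intro n hn
    simp only [Finset.mem_singleton] at hn
    simp [← h0, zero_pow hn]
  · apply summable_of_ratio_test_tendsto_lt_one hq
    · filter_upwards with n
      have h1 : (0:ℝ) < riseFact c n / n.factorial * q ^ n := by
        have := riseFact_pos hc n
        have : (0:ℝ) < n.factorial := by exact_mod_cast n.factorial_pos
        positivity
      exact ne_of_gt h1
    · have key : ∀ n : ℕ, ‖riseFact c (n+1) / (n+1).factorial * q ^ (n+1)‖ /
          ‖riseFact c n / n.factorial * q ^ n‖ = (1 + (c-1) * (1/(n+1))) * q := by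
        intro n
        have hrf := riseFact_pos hc n
        have hrf1 := riseFact_pos hc (n+1)
        have hfn : (0:ℝ) < n.factorial := by exact_mod_cast n.factorial_pos
        have hfn1 : (0:ℝ) < (n+1).factorial := by exact_mod_cast (n+1).factorial_pos
        have hqn : (0:ℝ) < q ^ n := pow_pos h0 n
        have hqn1 : (0:ℝ) < q ^ (n+1) := pow_pos h0 (n+1)
        rw [Real.norm_eq_abs, Real.norm_eq_abs, abs_of_pos (by positivity),
          abs_of_pos (by positivity)]
        rw [riseFact_succ, Nat.factorial_succ, pow_succ]
        have hn1 : ((n:ℝ)+1) ≠ 0 := by positivity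
        push_cast
        field_simp
        ring
      simp_rw [key]
      have : Filter.Tendsto (fun n : ℕ => (1 + (c-1) * (1/(n+1 : ℝ))) * q)
          Filter.atTop (nhds ((1 + (c-1) * 0) * q)) := by
        apply Filter.Tendsto.mul_const
        exact (tendsto_one_div_add_atTop_nhds_zero_nat.const_mul (c-1)).const_add 1
      simpa using this

set_option maxHeartbeats 1000000 in
/-- The generalized binomial series `∑ (a)_n x^n / n! = (1-x)^{-a}`. -/
lemma hasSum_binomial {a : ℝ} (ha : 0 < a) {x : ℝ} (hx0 : 0 ≤ x) (hx1 : x < 1) :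
    HasSum (fun n : ℕ => riseFact a n / n.factorial * x ^ n) ((1 - x) ^ (-a) : ℝ) := by
  set r : ℝ := (1 + x) / 2 with hr
  have hxr : x < r := by rw [hr]; linarith
  have hr1 : r < 1 := by rw [hr]; linarith
  have hr0 : 0 < r := by rw [hr]; linarith
  set t : Set ℝ := Set.Ioo (-r) r with ht
  set g : ℕ → ℝ → ℝ := fun n y => riseFact a n / n.factorial * y ^ n with hg
  set g' : ℕ → ℝ → ℝ := fun n y => riseFact a n / n.factorial * (n * y ^ (n-1)) with hg'
  set u : ℕ → ℝ := fun n => riseFact a n / n.factorial * (n * r ^ (n-1)) with hu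
  -- summability of the derivative bounds
  have hu_sum : Summable u := by
    rw [← summable_nat_add_iff 1]
    have : (fun n : ℕ => u (n + 1)) =
        fun n : ℕ => a * (riseFact (a+1) n / n.factorial * r ^ n) := by
      funext n
      simp only [hu]
      rw [riseFact_succ', Nat.factorial_succ]
      have : (0:ℝ) < n.factorial := by exact_mod_cast n.factorial_pos
      push_cast
      field_simp
    rw [this]
    exact (summable_binAux (by linarith) (le_of_lt hr0) hr1).mul_left a
  have hgderiv : ∀ n : ℕ, ∀ y ∈ t, HasDerivAt (g n) (g' n y) y := by
    intro n y _
    exact (hasDerivAt_pow n y).const_mul _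
  have hgbound : ∀ n : ℕ, ∀ y ∈ t, ‖g' n y‖ ≤ u n := by
    intro n y hy
    have hyr : |y| ≤ r := by
      rw [abs_le]
      exact ⟨le_of_lt hy.1, le_of_lt hy.2⟩
    have h1 : 0 ≤ riseFact a n / n.factorial := by
      have := riseFact_pos ha n
      have : (0:ℝ) < n.factorial := by exact_mod_cast n.factorial_pos
      positivity
    simp only [hg', hu, Real.norm_eq_abs, abs_mul]
    rw [abs_of_nonneg h1, Nat.abs_cast, abs_pow]
    apply mul_le_mul_of_nonneg_left _ h1
    apply mul_le_mul_of_nonneg_left _ (Nat.cast_nonneg n)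
    exact pow_le_pow_left₀ (abs_nonneg y) hyr _
  have h0t : (0:ℝ) ∈ t := by constructor <;> simp [hr0] <;> linarith
  have hxt : x ∈ t := ⟨by linarith, hxr⟩
  have hg0 : Summable fun n => g n 0 := by
    apply summable_of_ne_finset_zero (s := {0})
    intro n hn
    simp only [Finset.mem_singleton] at hn
    simp [hg, zero_pow hn]
  set F : ℝ → ℝ := fun y => ∑' n, g n y with hF
  have hFderiv : ∀ y ∈ t, HasDerivAt F (∑' n, g' n y) y := fun y hy =>
    hasDerivAt_tsum_of_isPreconnected hu_sum isOpen_Ioo (convex_Ioo _ _).isPreconnected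
      hgderiv hgbound h0t hg0 hy
  -- summability of g at points of t
  have hgsum : ∀ y ∈ t, Summable fun n => g n y := fun y hy =>
    summable_of_summable_hasDerivAt_of_isPreconnected hu_sum isOpen_Ioo
      (convex_Ioo _ _).isPreconnected hgderiv hgbound h0t hg0 hy
  -- the derivative identity
  have hkey : ∀ y ∈ t, ∑' n, g' n y = a * F y / (1 - y) := by
    intro y hy
    have hy1 : (0:ℝ) < 1 - y := by have := hy.2; nlinarith
    have hyabs : |y| < 1 := by rw [abs_lt]; constructor
                               · have := hy.1; linarith
                               · have := hy.2; linarith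
    -- T n = (a)_{n+1}/n! y^n, summable
    set T : ℕ → ℝ := fun n => riseFact a (n+1) / n.factorial * y ^ n with hT
    have hTsum : Summable T := by
      have heq : T = fun n => a * (riseFact (a+1) n / n.factorial * y ^ n) := by
        funext n
        simp only [hT]
        rw [riseFact_succ']
        ring
      rw [heq]
      apply Summable.mul_left
      apply Summable.of_norm
      have : ∀ n : ℕ, ‖riseFact (a+1) n / n.factorial * y ^ n‖ =
          riseFact (a+1) n / n.factorial * |y| ^ n := by
        intro n
        have h1 := riseFact_pos (show (0:ℝ) < a+1 by linarith) n
        have h2 : (0:ℝ) < n.factorial := by exact_mod_cast n.factorial_pos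
        rw [Real.norm_eq_abs, abs_mul, abs_of_pos (by positivity), abs_pow]
      simp_rw [this]
      exact summable_binAux (by linarith) (abs_nonneg y) hyabs
    set S : ℝ := ∑' n, T n with hS
    have hTS : HasSum T S := hTsum.hasSum
    -- ∑' g' n y = S
    have hstep1 : ∑' n, g' n y = S := by
      have h1 : ∀ n : ℕ, g' (n+1) y = T n := by
        intro n
        simp only [hg', hT, Nat.factorial_succ]
        have h2 : (0:ℝ) < n.factorial := by exact_mod_cast n.factorial_pos
        push_cast
        field_simp
      have h2 : HasSum (fun n => g' (n+1) y) S := by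
        simp_rw [h1]; exact hTS
      have h3 : HasSum (fun n => g' n y) (S + ∑ i ∈ Finset.range 1, g' i y) :=
        (hasSum_nat_add_iff 1).mp h2
      have h4 : ∑ i ∈ Finset.range 1, g' i y = 0 := by
        simp [hg']
      rw [h4, add_zero] at h3
      exact h3.tsum_eq
    -- S = a * F y + y * S
    have hstep2 : S = a * F y + y * S := by
      have hP : HasSum (fun n => a * g n y) (a * F y) := ((hgsum y hy).hasSum).mul_left a
      have hQ : HasSum (fun n => y * T n) (y * S) := hTS.mul_left y
      -- shift Q
      set Qs : ℕ → ℝ := fun n => if n = 0 then 0 else y * T (n-1) with hQs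
      have hQs1 : HasSum (fun n => Qs (n+1)) (y * S) := by
        have : (fun n => Qs (n+1)) = fun n => y * T n := by funext n; simp [hQs]
        rw [this]; exact hQ
      have hQs2 : HasSum Qs (y * S) := by
        have h3 := (hasSum_nat_add_iff 1).mp hQs1
        simpa [hQs] using h3
      have hsum : HasSum (fun n => a * g n y + Qs n) (a * F y + y * S) := hP.add hQs2
      have heq : ∀ n, a * g n y + Qs n = T n := by
        intro n
        cases n with
        | zero => simp [hg, hQs, hT, riseFact_zero, riseFact_one]
        | succ m =>
            simp only [hg, hQs, hT, Nat.succ_ne_zero, if_false, Nat.add_sub_cancel]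
            have h2 : (0:ℝ) < m.factorial := by exact_mod_cast m.factorial_pos
            rw [Nat.factorial_succ, riseFact_succ a (m+1), riseFact_succ a m, pow_succ]
            push_cast
            field_simp
      rw [funext heq] at hsum
      exact hTS.unique hsum
    rw [hstep1]
    have : S * (1 - y) = a * F y := by nlinarith [hstep2]
    field_simp [ne_of_gt hy1]
    nlinarith [this]
  -- φ = F y * (1-y)^a has zero derivative
  set φ : ℝ → ℝ := fun y => F y * (1 - y) ^ a with hφ
  have hφderiv : ∀ y ∈ t, HasDerivAt φ 0 y := by
    intro y hy
    have hy1 : (0:ℝ) < 1 - y := by have := hy.2; nlinarith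
    have h1 : HasDerivAt (fun y : ℝ => (1 - y) ^ a) (a * (1-y) ^ (a-1) * (-1)) y := by
      have h2 : HasDerivAt (fun y : ℝ => 1 - y) (-1) y := by
        simpa using (hasDerivAt_id y).const_sub 1
      exact (Real.hasDerivAt_rpow_const (Or.inl (ne_of_gt hy1))).comp y h2
    have h3 := (hFderiv y hy).mul h1
    have h4 : (∑' n, g' n y) * (1-y) ^ a + F y * (a * (1-y)^(a-1) * -1) = 0 := by
      rw [hkey y hy]
      have h5 : (1-y) ^ (a-1) = (1-y)^a / (1-y) := by
        rw [Real.rpow_sub hy1, Real.rpow_one]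
      rw [h5]
      field_simp
      ring
    rw [h4] at h3
    exact h3
  -- φ x = φ 0
  have hsub : Set.Icc (0:ℝ) x ⊆ t := by
    intro y hy
    exact ⟨by linarith [hy.1], by linarith [hy.2]⟩
  have hφconst : φ x = φ 0 := by
    have hcont : ContinuousOn φ (Set.Icc 0 x) := fun y hy =>
      ((hφderiv y (hsub hy)).continuousAt).continuousWithinAt
    have hd : ∀ y ∈ Set.Ico (0:ℝ) x, HasDerivWithinAt φ 0 (Set.Ici y) y := fun y hy =>
      (hφderiv y (hsub ⟨hy.1, le_of_lt hy.2⟩)).hasDerivWithinAt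
    exact constant_of_has_deriv_right_zero hcont hd x ⟨hx0, le_refl x⟩
  have hF0 : F 0 = 1 := by
    have hF0' : F 0 = ∑' n, g n 0 := rfl
    rw [hF0', tsum_eq_single 0]
    · simp [hg, riseFact_zero]
    · intro n hn
      simp [hg, zero_pow hn]
  have hφ0 : φ 0 = 1 := by simp [hφ, hF0]
  have hx1' : (0:ℝ) < 1 - x := by linarith
  have hFx : F x = (1 - x) ^ (-a) := by
    have h6 : F x * (1-x) ^ a = 1 := by
      have : φ x = 1 := by rw [hφconst, hφ0]
      exact this
    have h7 : (0:ℝ) < (1-x) ^ a := Real.rpow_pos_of_pos hx1' a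
    rw [Real.rpow_neg (le_of_lt hx1'), ← one_div]
    exact eq_div_of_mul_eq (ne_of_gt h7) h6
  have := (hgsum x hxt).hasSum
  rwa [show (∑' n, g n x) = F x from rfl, hFx] at this

lemma Gamma_riseFact {x : ℝ} (hx : 0 < x) (m : ℕ) :
    Real.Gamma (x + m) = riseFact x m * Real.Gamma x := by
  induction m with
  | zero => simp [riseFact_zero]
  | succ m ih =>
      have hxm : x + m ≠ 0 := by positivity
      have : (x + (m+1 : ℕ) : ℝ) = (x + m) + 1 := by push_cast; ring
      rw [this, Real.Gamma_add_one hxm, ih, riseFact_succ]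
      ring

lemma factorial_riseFact (m j : ℕ) :
    ((m + j).factorial : ℝ) = (m.factorial : ℝ) * riseFact (m + 1) j := by
  induction j with
  | zero => simp [riseFact_zero]
  | succ j ih =>
      rw [← Nat.add_assoc, Nat.factorial_succ, riseFact_succ]
      push_cast [ih]; ring


open MeasureTheory

lemma betaReal_aux {x : ℝ} (u v : ℝ) (hx0 : 0 ≤ x) (hx1 : x ≤ 1) :
    (x:ℂ) ^ ((u:ℂ)-1) * (1 - (x:ℂ)) ^ ((v:ℂ)-1) = ((x ^ (u-1) * (1-x) ^ (v-1) : ℝ) : ℂ) := by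
  rw [Complex.ofReal_mul, Complex.ofReal_cpow hx0,
    Complex.ofReal_cpow (by linarith : (0:ℝ) ≤ 1 - x)]
  push_cast
  ring

/-- Real Beta integrand is integrable on `Ioo 0 1`. -/
lemma betaReal_integrableOn {u v : ℝ} (hu : 0 < u) (hv : 0 < v) :
    IntegrableOn (fun x : ℝ => x ^ (u-1) * (1-x) ^ (v-1)) (Set.Ioo 0 1) := by
  have hc := Complex.betaIntegral_convergent (u := (u:ℂ)) (v := (v:ℂ)) (by simpa) (by simpa)
  rw [intervalIntegrable_iff_integrableOn_Ioc_of_le zero_le_one] at hc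
  have hre : IntegrableOn (fun x : ℝ => ((x:ℂ) ^ ((u:ℂ)-1) * (1 - (x:ℂ)) ^ ((v:ℂ)-1)).re)
      (Set.Ioc 0 1) := hc.re
  have h2 : IntegrableOn (fun x : ℝ => ((x:ℂ) ^ ((u:ℂ)-1) * (1 - (x:ℂ)) ^ ((v:ℂ)-1)).re)
      (Set.Ioo 0 1) := hre.mono_set Set.Ioo_subset_Ioc_self
  apply h2.congr_fun _ measurableSet_Ioo
  intro x hx
  show ((x:ℂ) ^ ((u:ℂ)-1) * (1 - (x:ℂ)) ^ ((v:ℂ)-1)).re = x ^ (u-1) * (1-x) ^ (v-1)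
  rw [betaReal_aux u v (le_of_lt hx.1) (le_of_lt hx.2), Complex.ofReal_re]

/-- The real Beta integral evaluates to the Gamma ratio. -/
lemma betaReal_integral {u v : ℝ} (hu : 0 < u) (hv : 0 < v) :
    ∫ x in Set.Ioo (0:ℝ) 1, x ^ (u-1) * (1-x) ^ (v-1) =
      Real.Gamma u * Real.Gamma v / Real.Gamma (u+v) := by
  have key := Complex.Gamma_mul_Gamma_eq_betaIntegral (s := (u:ℂ)) (t := (v:ℂ))
    (by simpa) (by simpa)
  have hbeta : Complex.betaIntegral (u:ℂ) (v:ℂ) =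
      ((∫ x in Set.Ioo (0:ℝ) 1, x ^ (u-1) * (1-x) ^ (v-1) : ℝ) : ℂ) := by
    rw [Complex.betaIntegral, intervalIntegral.integral_of_le zero_le_one,
      MeasureTheory.integral_Ioc_eq_integral_Ioo]
    have h1 : ∫ x in Set.Ioo (0:ℝ) 1, (x:ℂ) ^ ((u:ℂ)-1) * (1 - (x:ℂ)) ^ ((v:ℂ)-1) =
        ∫ x in Set.Ioo (0:ℝ) 1, ((x ^ (u-1) * (1-x) ^ (v-1) : ℝ) : ℂ) :=
      setIntegral_congr_fun measurableSet_Ioo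
        (fun x hx => betaReal_aux u v (le_of_lt hx.1) (le_of_lt hx.2))
    rw [h1]
    exact integral_ofReal
  rw [hbeta, ← Complex.ofReal_add, Complex.Gamma_ofReal, Complex.Gamma_ofReal,
    Complex.Gamma_ofReal, ← Complex.ofReal_mul, ← Complex.ofReal_mul] at key
  have hreal : Real.Gamma u * Real.Gamma v =
      Real.Gamma (u+v) * ∫ x in Set.Ioo (0:ℝ) 1, x ^ (u-1) * (1-x) ^ (v-1) := by
    exact_mod_cast key
  have hG : Real.Gamma (u+v) ≠ 0 := ne_of_gt (Real.Gamma_pos_of_pos (by linarith))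
  field_simp [hG]
  linarith [hreal]


open MeasureTheory

/-- Gauss's summation theorem for the hypergeometric series at 1. -/
theorem hasSum_gauss {a b c : ℝ} (ha : 0 < a) (hb : 0 < b) (hcab : a + b < c) :
    HasSum (fun j : ℕ => riseFact a j * riseFact b j / (riseFact c j * j.factorial))
      (Real.Gamma c * Real.Gamma (c-a-b) / (Real.Gamma (c-a) * Real.Gamma (c-b))) := by
  have hc : 0 < c := by linarith
  have hca : 0 < c - a := by linarith
  have hcb : 0 < c - b := by linarith
  have hcab' : 0 < c - a - b := by linarith
  -- the integrand family
  set f : ℕ → ℝ → ℝ :=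
    fun j x => riseFact a j / j.factorial * (x ^ (b + j - 1) * (1-x) ^ ((c-b) - 1)) with hf
  have hcoef_pos : ∀ j : ℕ, 0 < riseFact a j / j.factorial := by
    intro j
    have h1 := riseFact_pos ha j
    have h2 : (0:ℝ) < j.factorial := by exact_mod_cast j.factorial_pos
    positivity
  -- each integral
  have hint : ∀ j : ℕ, IntegrableOn (f j) (Set.Ioo 0 1) := by
    intro j
    exact (betaReal_integrableOn (by positivity : (0:ℝ) < b + j) hcb).const_mul _
  have hval : ∀ j : ℕ, ∫ x in Set.Ioo (0:ℝ) 1, f j x =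
      riseFact a j / j.factorial *
        (Real.Gamma (b+j) * Real.Gamma (c-b) / Real.Gamma (c+j)) := by
    intro j
    rw [hf]
    simp only
    rw [integral_const_mul, betaReal_integral (by positivity : (0:ℝ) < b + j) hcb]
    congr 2
    ring
  -- nonnegativity on the set
  have hfnn : ∀ j : ℕ, ∀ x ∈ Set.Ioo (0:ℝ) 1, 0 ≤ f j x := by
    intro j x hx
    have h1 := le_of_lt (hcoef_pos j)
    have h2 : (0:ℝ) ≤ x := le_of_lt hx.1
    have h3 : (0:ℝ) ≤ 1 - x := by linarith [hx.2]
    have := Real.rpow_nonneg h2 (b + j - 1)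
    have := Real.rpow_nonneg h3 ((c-b) - 1)
    positivity
  -- measurability
  have hcont : ∀ j : ℕ, ContinuousOn (f j) (Set.Ioo 0 1) := by
    intro j x hx
    have h1 : ContinuousAt (fun x : ℝ => x ^ (b + (j:ℝ) - 1)) x :=
      Real.continuousAt_rpow_const x _ (Or.inl (ne_of_gt hx.1))
    have h2 : ContinuousAt (fun x : ℝ => (1-x) ^ ((c-b) - 1)) x := by
      have h3 : (1 - x) ≠ 0 := by have := hx.2; intro h; simp only [Set.mem_Ioo] at hx; linarith
      exact (Real.continuousAt_rpow_const (1-x) _ (Or.inl h3)).comp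
        ((continuous_const.sub continuous_id).continuousAt)
    exact (continuousAt_const.mul (h1.mul h2)).continuousWithinAt
  -- the lintegral identity
  set μ : Measure ℝ := volume.restrict (Set.Ioo 0 1) with hμ
  have hg_eq : ∀ j : ℕ, ENNReal.ofReal (riseFact a j / j.factorial *
      (Real.Gamma (b+j) * Real.Gamma (c-b) / Real.Gamma (c+j))) =
      ∫⁻ x, ENNReal.ofReal (f j x) ∂μ := by
    intro j
    rw [← hval j]
    exact ofReal_integral_eq_lintegral_ofReal (hint j)
      (ae_restrict_of_forall_mem measurableSet_Ioo (hfnn j))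
  have hswap : ∑' j : ℕ, ∫⁻ x, ENNReal.ofReal (f j x) ∂μ =
      ∫⁻ x, ∑' j : ℕ, ENNReal.ofReal (f j x) ∂μ :=
    (lintegral_tsum (fun j => (ENNReal.measurable_ofReal.comp_aemeasurable
      (((hcont j).aemeasurable measurableSet_Ioo))))).symm
  -- pointwise sum on the open interval
  have hpt : ∀ x ∈ Set.Ioo (0:ℝ) 1, (∑' j : ℕ, ENNReal.ofReal (f j x)) =
      ENNReal.ofReal (x ^ (b-1) * (1-x) ^ ((c-a-b) - 1)) := by
    intro x hx
    have hx0 : (0:ℝ) < x := hx.1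
    have hx1 : x < 1 := hx.2
    have h1x : (0:ℝ) < 1 - x := by linarith
    have hbin := hasSum_binomial ha (le_of_lt hx0) hx1
    have hmul := hbin.mul_left (x ^ (b-1) * (1-x) ^ ((c-b) - 1))
    have hterm : ∀ j : ℕ, x ^ (b-1) * (1-x) ^ ((c-b) - 1) *
        (riseFact a j / j.factorial * x ^ j) = f j x := by
      intro j
      rw [hf]
      simp only
      have : x ^ (b + (j:ℝ) - 1) = x ^ (b - 1) * x ^ (j:ℕ) := by
        rw [show b + (j:ℝ) - 1 = (b - 1) + (j:ℝ) by ring,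
          Real.rpow_add hx0, Real.rpow_natCast]
      rw [this]
      ring
    rw [funext hterm] at hmul
    have hsumval : x ^ (b-1) * (1-x) ^ ((c-b) - 1) * (1-x) ^ (-a) =
        x ^ (b-1) * (1-x) ^ ((c-a-b) - 1) := by
      rw [mul_assoc, ← Real.rpow_add h1x]
      congr 2
      ring
    rw [hsumval] at hmul
    rw [← hmul.tsum_eq]
    exact (ENNReal.ofReal_tsum_of_nonneg (fun j => hfnn j x hx) hmul.summable).symm
  have hswap2 : ∫⁻ x, ∑' j : ℕ, ENNReal.ofReal (f j x) ∂μ =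
      ∫⁻ x, ENNReal.ofReal (x ^ (b-1) * (1-x) ^ ((c-a-b) - 1)) ∂μ := by
    rw [hμ]
    exact setLIntegral_congr_fun measurableSet_Ioo hpt
  have hlast : ∫⁻ x, ENNReal.ofReal (x ^ (b-1) * (1-x) ^ ((c-a-b) - 1)) ∂μ =
      ENNReal.ofReal (Real.Gamma b * Real.Gamma (c-a-b) / Real.Gamma (c-a)) := by
    rw [← ofReal_integral_eq_lintegral_ofReal (betaReal_integrableOn hb hcab')
      (ae_restrict_of_forall_mem measurableSet_Ioo (fun x hx => by
        have h2 : (0:ℝ) ≤ x := le_of_lt hx.1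
        have h3 : (0:ℝ) ≤ 1 - x := by linarith [hx.2]
        have := Real.rpow_nonneg h2 (b - 1)
        have := Real.rpow_nonneg h3 ((c-a-b) - 1)
        positivity))]
    rw [show Real.Gamma (c-a) = Real.Gamma (b + (c-a-b)) by ring_nf]
    exact congrArg _ (betaReal_integral hb hcab')
  -- combine in ℝ≥0∞
  set g : ℕ → ℝ := fun j => riseFact a j / j.factorial *
      (Real.Gamma (b+j) * Real.Gamma (c-b) / Real.Gamma (c+j)) with hg
  have hgnn : ∀ j, 0 ≤ g j := by
    intro j
    have h1 := le_of_lt (hcoef_pos j)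
    have h2 := Real.Gamma_pos_of_pos (show (0:ℝ) < b + j by positivity)
    have h3 := Real.Gamma_pos_of_pos hcb
    have h4 := Real.Gamma_pos_of_pos (show (0:ℝ) < c + j by positivity)
    positivity
  have hVnn : (0:ℝ) ≤ Real.Gamma b * Real.Gamma (c-a-b) / Real.Gamma (c-a) := by
    have h2 := Real.Gamma_pos_of_pos hb
    have h3 := Real.Gamma_pos_of_pos hcab'
    have h4 := Real.Gamma_pos_of_pos hca
    positivity
  have hENN : ∑' j : ℕ, ENNReal.ofReal (g j) =
      ENNReal.ofReal (Real.Gamma b * Real.Gamma (c-a-b) / Real.Gamma (c-a)) := by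
    calc ∑' j : ℕ, ENNReal.ofReal (g j)
        = ∑' j : ℕ, ∫⁻ x, ENNReal.ofReal (f j x) ∂μ := by
          exact tsum_congr (fun j => hg_eq j)
      _ = _ := by rw [hswap, hswap2, hlast]
  have hfin : ∑' j : ℕ, ENNReal.ofReal (g j) ≠ ⊤ := by
    rw [hENN]; exact ENNReal.ofReal_ne_top
  have hsummable : Summable g := by
    have h1 := ENNReal.summable_toReal hfin
    have h2 : (fun j => (ENNReal.ofReal (g j)).toReal) = g := by
      funext j; exact ENNReal.toReal_ofReal (hgnn j)
    rwa [h2] at h1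
  have htsum : ∑' j, g j = Real.Gamma b * Real.Gamma (c-a-b) / Real.Gamma (c-a) := by
    have h1 := congrArg ENNReal.toReal hENN
    rw [ENNReal.tsum_toReal_eq (fun j => ENNReal.ofReal_ne_top)] at h1
    simp_rw [ENNReal.toReal_ofReal (hgnn _)] at h1
    rw [ENNReal.toReal_ofReal hVnn] at h1
    exact h1
  have hgsum : HasSum g (Real.Gamma b * Real.Gamma (c-a-b) / Real.Gamma (c-a)) :=
    htsum ▸ hsummable.hasSum
  -- convert g back to the hypergeometric term
  have hGb := Real.Gamma_pos_of_pos hb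
  have hGc := Real.Gamma_pos_of_pos hc
  have hGcb := Real.Gamma_pos_of_pos hcb
  have hGca := Real.Gamma_pos_of_pos hca
  have hterm : ∀ j : ℕ, g j * (Real.Gamma c / (Real.Gamma b * Real.Gamma (c-b))) =
      riseFact a j * riseFact b j / (riseFact c j * j.factorial) := by
    intro j
    rw [hg]
    simp only
    rw [Gamma_riseFact hb j, Gamma_riseFact hc j]
    have h2 : (0:ℝ) < j.factorial := by exact_mod_cast j.factorial_pos
    have h5 := riseFact_pos hc j
    field_simp
  have hfinal := hgsum.mul_right (Real.Gamma c / (Real.Gamma b * Real.Gamma (c-b)))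
  rw [funext hterm] at hfinal
  have hV : Real.Gamma c * Real.Gamma (c-a-b) / (Real.Gamma (c-a) * Real.Gamma (c-b)) =
      Real.Gamma b * Real.Gamma (c-a-b) / Real.Gamma (c-a) *
        (Real.Gamma c / (Real.Gamma b * Real.Gamma (c-b))) := by
    rw [div_mul_div_comm, div_eq_div_iff (mul_pos hGca hGcb).ne' (mul_pos hGca (mul_pos hGb hGcb)).ne']
    ring
  rw [hV]
  exact hfinal


/-- The `(γ, ψ)` Gnedin–Fisher Gibbs weight. -/
noncomputable def gfWeight (γ ψ : ℝ) (n k : ℕ) : ℝ :=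
  riseFact γ (n - k) * riseFact (1 - ψ) (k - 1) * riseFact (1 - γ + ψ) (k - 1) /
    (riseFact (1 + ψ) (n - 1) * riseFact (1 + γ - ψ) (n - 1))

/-- The shifted generalized Waring mixing law of the `(γ, ψ)` Gnedin–Fisher model. -/
noncomputable def gfMix (γ ψ : ℝ) (ξ : ℕ) : ℝ :=
  Real.Gamma (γ + 1 - ψ) * Real.Gamma (1 + ψ) / Real.Gamma γ *
    (riseFact (1 - ψ) (ξ - 1) * riseFact (1 - γ + ψ) (ξ - 1)) /
    ((Nat.factorial (ξ - 1) : ℝ) * (Nat.factorial ξ : ℝ))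

/-- The `(γ, ψ)` Gnedin–Fisher Gibbs weight is the mixture of the extreme
Poisson–Dirichlet `(-1, ξ)` Gibbs weights `(ξ-1)! ξ! / ((ξ-k)! (ξ+n-1)!)` over
`ξ = k, k+1, …` by the shifted generalized Waring mixing law. -/
theorem gnedin_fisher_mixture_representation (γ ψ : ℝ)
    (hψ0 : 0 ≤ ψ) (hψ1 : ψ < 1) (hγ0 : 0 < γ) (hγ1 : γ < ψ + 1)
    (n k : ℕ) (hk : 1 ≤ k) (hkn : k ≤ n) :
    gfWeight γ ψ n k =
      ∑' j : ℕ,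
        gfMix γ ψ (k + j) *
          ((Nat.factorial (k + j - 1) : ℝ) * (Nat.factorial (k + j) : ℝ) /
            ((Nat.factorial j : ℝ) * (Nat.factorial (k + j + n - 1) : ℝ))) := by
  obtain ⟨K, rfl⟩ : ∃ K, k = K + 1 := ⟨k - 1, by omega⟩
  obtain ⟨M, rfl⟩ : ∃ M, n = K + 1 + M := ⟨n - (K + 1), by omega⟩
  -- parameters of the hypergeometric series
  set a : ℝ := 1 - ψ + K with ha_def
  set b : ℝ := 1 - γ + ψ + K with hb_def
  set c : ℝ := 2*(K:ℝ) + (M:ℝ) + 2 with hc_def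
  have hcnat : ((2*K + M + 1 : ℕ) : ℝ) + 1 = c := by rw [hc_def]; push_cast; ring
  have ha : 0 < a := by rw [ha_def]; have : (0:ℝ) ≤ K := Nat.cast_nonneg K; linarith
  have hb : 0 < b := by rw [hb_def]; have : (0:ℝ) ≤ K := Nat.cast_nonneg K; linarith
  have hab : a + b < c := by
    rw [ha_def, hb_def, hc_def]; push_cast
    have : (0:ℝ) ≤ M := Nat.cast_nonneg M
    linarith
  have hgauss := hasSum_gauss ha hb hab
  -- positivity facts
  have hψ' : (0:ℝ) < 1 - ψ := by linarith
  have hγψ' : (0:ℝ) < 1 - γ + ψ := by linarith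
  have hψ1' : (0:ℝ) < 1 + ψ := by linarith
  have hγψ1' : (0:ℝ) < 1 + γ - ψ := by linarith
  have hGγ := Real.Gamma_pos_of_pos hγ0
  have hGψ := Real.Gamma_pos_of_pos hψ1'
  have hGγψ := Real.Gamma_pos_of_pos hγψ1'
  -- the constant
  set Cγ : ℝ := Real.Gamma (γ + 1 - ψ) * Real.Gamma (1 + ψ) / Real.Gamma γ with hCγ
  set A : ℝ := riseFact (1 - ψ) K with hA
  set B : ℝ := riseFact (1 - γ + ψ) K with hB
  set D : ℝ := Cγ * A * B / ((2*K + M + 1).factorial : ℝ) with hD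
  -- termwise identity
  have hterm : ∀ j : ℕ,
      gfMix γ ψ (K + 1 + j) *
        ((Nat.factorial (K + 1 + j - 1) : ℝ) * (Nat.factorial (K + 1 + j) : ℝ) /
          ((Nat.factorial j : ℝ) * (Nat.factorial (K + 1 + j + (K + 1 + M) - 1) : ℝ))) =
      D * (riseFact a j * riseFact b j / (riseFact c j * j.factorial)) := by
    intro j
    have e1 : K + 1 + j - 1 = K + j := by omega
    have e2 : K + 1 + j + (K + 1 + M) - 1 = (2*K + M + 1) + j := by omega
    rw [gfMix, e1, e2]
    rw [show riseFact (1 - ψ) (K + j) = A * riseFact a j from riseFact_add _ K j,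
      show riseFact (1 - γ + ψ) (K + j) = B * riseFact b j from riseFact_add _ K j,
      factorial_riseFact (2*K + M + 1) j, hcnat]
    have hf1 : (0:ℝ) < (K + j).factorial := by exact_mod_cast (K + j).factorial_pos
    have hf2 : (0:ℝ) < (K + 1 + j).factorial := by exact_mod_cast (K + 1 + j).factorial_pos
    have hf3 : (0:ℝ) < j.factorial := by exact_mod_cast j.factorial_pos
    have hf4 : (0:ℝ) < (2*K + M + 1).factorial := by
      exact_mod_cast (2*K + M + 1).factorial_pos
    have hrc : (0:ℝ) < riseFact c j := riseFact_pos (by rw [hc_def]; positivity) j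
    rw [hD]
    field_simp [ne_of_gt hGγ]
    rw [hCγ, show γ + 1 - ψ = 1 + γ - ψ by ring]
    field_simp
  -- rewrite the series
  rw [tsum_congr hterm, (hgauss.mul_left D).tsum_eq]
  -- now the Gamma algebra
  have hc1 : c - a - b = γ + M := by rw [ha_def, hb_def, hc_def]; push_cast; ring
  have hc2 : c - a = (1 + ψ) + (K + M : ℕ) := by rw [ha_def, hc_def]; push_cast; ring
  have hc3 : c - b = (1 + γ - ψ) + (K + M : ℕ) := by rw [hb_def, hc_def]; push_cast; ring
  have hΓc : Real.Gamma c = ((2*K + M + 1).factorial : ℝ) := by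
    rw [← hcnat]; exact_mod_cast Real.Gamma_nat_eq_factorial (2*K + M + 1)
  have hΓcab : Real.Gamma (c - a - b) = riseFact γ M * Real.Gamma γ := by
    rw [hc1, show γ + (M:ℝ) = γ + (M:ℕ) by push_cast; ring]
    exact Gamma_riseFact hγ0 M
  have hΓca : Real.Gamma (c - a) = riseFact (1 + ψ) (K + M) * Real.Gamma (1 + ψ) := by
    rw [hc2]; exact Gamma_riseFact hψ1' (K + M)
  have hΓcb : Real.Gamma (c - b) =
      riseFact (1 + γ - ψ) (K + M) * Real.Gamma (1 + γ - ψ) := by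
    rw [hc3]; exact Gamma_riseFact hγψ1' (K + M)
  have hΓeq : Real.Gamma (γ + 1 - ψ) = Real.Gamma (1 + γ - ψ) := by ring_nf
  rw [hΓc, hΓcab, hΓca, hΓcb, hD, hCγ, hΓeq]
  -- unfold gfWeight
  rw [gfWeight]
  have e3 : K + 1 + M - (K + 1) = M := by omega
  have e4 : K + 1 - 1 = K := by omega
  have e5 : K + 1 + M - 1 = K + M := by omega
  rw [e3, e4, e5, ← hA, ← hB]
  have hf4 : (0:ℝ) < (2*K + M + 1).factorial := by exact_mod_cast (2*K + M + 1).factorial_pos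
  have hr1 : (0:ℝ) < riseFact (1 + ψ) (K + M) := riseFact_pos hψ1' _
  have hr2 : (0:ℝ) < riseFact (1 + γ - ψ) (K + M) := riseFact_pos hγψ1' _
  field_simp [ne_of_gt hGγ]
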